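/- arXiv:1812.08809 — 3 statements merged into one kernel-verified Lean document; each statement's English description precedes it below -/
import Mathlib

section
/- If T is a Hamiltonian digraph on an odd number t ≥ 3 of vertices, and H_1, ..., H_t are arbitrary digraphs with |V(H_1)| ≥ 2 and |V(H_i)| ≥ 3 for all i ≥ 2, then the composition Q = T[H_1, ..., H_t] has a pair of arc-disjoint strong spanning subdigraphs. -/
/-- A digraph (given by its arc relation) is strong (strongly connected). -/
def IsStrong {V : Type*} (A : V → V → Prop) : Prop :=
  ∀ x y : V, Relation.ReflTransGen A x y

/-- `A` has a pair of arc-disjoint strong spanning subdigraphs (a good decomposition). -/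
def GoodDecomp {V : Type*} (A : V → V → Prop) : Prop :=
  ∃ A₁ A₂ : V → V → Prop,
    (∀ x y, A₁ x y → A x y) ∧ (∀ x y, A₂ x y → A x y) ∧
    (∀ x y, ¬ (A₁ x y ∧ A₂ x y)) ∧ IsStrong A₁ ∧ IsStrong A₂

/-- Arc relation of the composition `T[H_1, ..., H_t]`. -/
def CompArc {t : ℕ} {Vt : Fin t → Type*} (T : Fin t → Fin t → Prop)
    (H : ∀ i, Vt i → Vt i → Prop) : (Σ i, Vt i) → (Σ i, Vt i) → Prop :=
  fun a b => T a.1 b.1 ∨ ∃ h : a.1 = b.1, H b.1 (h ▸ a.2) b.2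


/-- The cyclic successor on `Fin n`. -/
def finSucc {n : ℕ} (x : Fin n) : Fin n := ⟨(x.val + 1) % n, Nat.mod_lt _ x.pos⟩

def Semicomplete {V : Type*} (A : V → V → Prop) : Prop :=
  ∀ x y : V, x ≠ y → A x y ∨ A y x

/-- `A` is 2-arc-strong: it stays strong after deleting any set of at most one arc. -/
def TwoArcStrong {V : Type*} (A : V → V → Prop) : Prop :=
  ∀ X : Set (V × V), X.Subsingleton → IsStrong (fun x y => A x y ∧ (x, y) ∉ X)

/-- Digraph isomorphism. -/
def DIso {V W : Type*} (A : V → V → Prop) (B : W → W → Prop) : Prop :=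
  ∃ e : V ≃ W, ∀ x y, A x y ↔ B (e x) (e y)

/-- Arc relation of the directed cycle on `n` vertices. -/
def CycleArc (n : ℕ) : Fin n → Fin n → Prop := fun x y => y = finSucc x

/-- `T` (on `Fin t`) has a Hamiltonian cycle. -/
def HasHamCycle {t : ℕ} (T : Fin t → Fin t → Prop) : Prop :=
  ∃ e : Equiv.Perm (Fin t), ∀ i, T (e i) (e (finSucc i))

/-- Cartesian product of digraphs. -/
def CartProd {V W : Type*} (A : V → V → Prop) (B : W → W → Prop) :
    V × W → V × W → Prop :=
  fun p q => (A p.1 q.1 ∧ p.2 = q.2) ∨ (p.1 = q.1 ∧ B p.2 q.2)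

/-- Strong product of digraphs. -/
def StrongProd {V W : Type*} (A : V → V → Prop) (B : W → W → Prop) :
    V × W → V × W → Prop :=
  fun p q => (A p.1 q.1 ∧ p.2 = q.2) ∨ (p.1 = q.1 ∧ B p.2 q.2) ∨ (A p.1 q.1 ∧ B p.2 q.2)

/-- Lexicographic product of digraphs. -/
def LexProd {V W : Type*} (A : V → V → Prop) (B : W → W → Prop) :
    V × W → V × W → Prop :=
  fun p q => A p.1 q.1 ∨ (p.1 = q.1 ∧ B p.2 q.2)

/-- `k`-th Cartesian power of a digraph. -/
def CartPow {V : Type*} (A : V → V → Prop) (k : ℕ) :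
    (Fin k → V) → (Fin k → V) → Prop :=
  fun f g => ∃ i, A (f i) (g i) ∧ ∀ j, j ≠ i → f j = g j

/-- `A` has a collection of pairwise arc-disjoint directed cycles covering all vertices. -/
def HasCycleCover {V : Type*} (A : V → V → Prop) : Prop :=
  ∃ (k : ℕ) (m : Fin k → ℕ) (c : ∀ i : Fin k, Fin (m i) → V),
    (∀ i, 2 ≤ m i) ∧ (∀ i, Function.Injective (c i)) ∧
    (∀ i x, A (c i x) (c i (finSucc x))) ∧
    (∀ i j x y, c i x = c j y → c i (finSucc x) = c j (finSucc y) → i = j) ∧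
    (∀ v : V, ∃ i x, c i x = v)

/-- The digraph `C3[K2bar, K2bar, K2bar]`. -/
def Exc1 : Fin 3 × Fin 2 → Fin 3 × Fin 2 → Prop := fun p q => q.1 = finSucc p.1

/-- The digraph `C3[P2, K2bar, K2bar]`, the single arc of `P2` being `(0,0) → (0,1)`. -/
def Exc2 : Fin 3 × Fin 2 → Fin 3 × Fin 2 → Prop :=
  fun p q => q.1 = finSucc p.1 ∨ (p.1 = 0 ∧ q.1 = 0 ∧ p.2 = 0 ∧ q.2 = 1)

/-- Block index for `C3[K2bar, K2bar, K3bar]`. -/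
def blk : (Fin 2 ⊕ Fin 2 ⊕ Fin 3) → Fin 3 :=
  Sum.elim (fun _ => 0) (Sum.elim (fun _ => 1) (fun _ => 2))

/-- The digraph `C3[K2bar, K2bar, K3bar]`. -/
def Exc3 : (Fin 2 ⊕ Fin 2 ⊕ Fin 3) → (Fin 2 ⊕ Fin 2 ⊕ Fin 3) → Prop :=
  fun p q => blk q = finSucc (blk p)

/-- `S4`: the complete digraph on 4 vertices minus the directed 4-cycle `x → x+1`. -/
def S4Arc : Fin 4 → Fin 4 → Prop := fun x y => x ≠ y ∧ y ≠ finSucc x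


/-!
Only the arcs of `Q` along a Hamiltonian cycle `C` of `T` are used. Number the positions on `C`
so that `H_1` sits at position `0`, and sort the vertices of every block into classes: `0, 1` at
position `0` and `0, 1, 2` elsewhere, surplus vertices joining the last class. Both arc sets are
pulled back from two arc-disjoint digraphs on the slots `(position, class)`, and since every slot
with an in-arc is hit, walks of positive length between slots lift to `Q`; so it suffices that
both slot digraphs are strong with every slot on a cycle. Between middle positions one colour joins
distinct classes and the other equal ones; the six arcs out of and into position `0` are split
three and three, so that every slot keeps an in-arc and an out-arc of each colour and a single lap
around `C` joins the two classes at position `0` in both directions. Hence every slot reaches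
position `0` and is reached from it.
-/

open Relation Function

lemma val_finSucc {n : ℕ} (x : Fin n) :
    (finSucc x).val = if x.val + 1 = n then 0 else x.val + 1 := by
  unfold finSucc
  split_ifs with h
  · simp [h]
  · exact Nat.mod_eq_of_lt (by omega)

lemma finSucc_mk {n j : ℕ} (h : j + 1 < n) :
    finSucc (⟨j, Nat.lt_of_succ_lt h⟩ : Fin n) = ⟨j + 1, h⟩ :=
  Fin.ext (Nat.mod_eq_of_lt h)

lemma finSucc_eq_add_one {n : ℕ} [NeZero n] (x : Fin n) : finSucc x = x + 1 := by
  ext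
  simp [finSucc, Fin.val_add, Nat.add_mod]

lemma HasHamCycle.exists_perm_apply_eq {t : ℕ} {T : Fin t → Fin t → Prop} (hT : HasHamCycle T)
    (k i : Fin t) : ∃ E : Equiv.Perm (Fin t), E k = i ∧ ∀ j, T (E j) (E (finSucc j)) := by
  obtain ⟨e, he⟩ := hT
  have : NeZero t := ⟨k.pos.ne'⟩
  refine ⟨(Equiv.addRight (e.symm i - k)).trans e, by simp, fun j => ?_⟩
  simpa [finSucc_eq_add_one, add_right_comm] using he (j + (e.symm i - k))

lemma transGen_onFun_of_transGen {V W : Type*} {B : W → W → Prop} {f : V → W}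
    (hf : ∀ u w, B u w → w ∈ Set.range f) {x y : V} (h : TransGen B (f x) (f y)) :
    TransGen (B on f) x y := by
  suffices ∀ a, TransGen B a (f y) → ∀ x, f x = a → TransGen (B on f) x y from
    this _ h x rfl
  intro a ha
  induction ha using TransGen.head_induction_on with
  | single hay => rintro x rfl; exact .single hay
  | head hac _ ih =>
    rintro x rfl
    obtain ⟨z, rfl⟩ := hf _ _ hac
    exact .head hac (ih z rfl)

lemma isStrong_onFun {V W : Type*} {B : W → W → Prop} {f : V → W}
    (hf : ∀ u w, B u w → w ∈ Set.range f) (hB : ∀ x y, TransGen B (f x) (f y)) :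
    IsStrong (B on f) :=
  fun x y => (transGen_onFun_of_transGen hf (hB x y)).to_reflTransGen

section Layered

variable {t : ℕ} {α : Type*} {R : Fin t × α → Fin t × α → Prop}
  {P : Fin t × α → Prop}

lemma exists_reflTransGen_to_fst_eq_zero
    (hR : ∀ p, P p → ∃ q, P q ∧ R p q ∧ q.1 = finSucc p.1) (p : Fin t × α) (hp : P p) :
    ∃ q, P q ∧ q.1.val = 0 ∧ ReflTransGen R p q := by
  by_cases h0 : p.1.val = 0
  · exact ⟨p, hp, h0, .refl⟩
  obtain ⟨q, hq, hpq, hsucc⟩ := hR p hp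
  have hqval := val_finSucc p.1
  rw [← hsucc] at hqval
  by_cases hlast : p.1.val + 1 = t
  · exact ⟨q, hq, by simpa [hlast] using hqval, .single hpq⟩
  obtain ⟨r, hr, hr0, hqr⟩ := exists_reflTransGen_to_fst_eq_zero hR q hq
  exact ⟨r, hr, hr0, .head hpq hqr⟩
termination_by t - p.1.val
decreasing_by rw [hsucc, val_finSucc, if_neg hlast]; omega

lemma exists_reflTransGen_from_fst_eq_zero
    (hR : ∀ q, P q → q.1.val ≠ 0 → ∃ p, P p ∧ R p q ∧ q.1 = finSucc p.1)
    (q : Fin t × α) (hq : P q) : ∃ p, P p ∧ p.1.val = 0 ∧ ReflTransGen R p q := by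
  by_cases h0 : q.1.val = 0
  · exact ⟨q, hq, h0, .refl⟩
  obtain ⟨p, hp, hpq, hsucc⟩ := hR q hq h0
  have hqval := val_finSucc p.1
  rw [← hsucc] at hqval
  obtain ⟨r, hr, hr0, hrp⟩ := exists_reflTransGen_from_fst_eq_zero hR p hp
  exact ⟨r, hr, hr0, hrp.tail hpq⟩
termination_by q.1.val
decreasing_by split_ifs at hqval <;> omega

end Layered

namespace Slot

def firstStep : Bool → Fin 3 → Fin 3 → Prop
  | true, x, y => x = ![0, 0, 1] y
  | false, x, y => x = ![1, 1, 0] y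

def midStep : Bool → Fin 3 → Fin 3 → Prop
  | true, x, y => x ≠ y
  | false, x, y => x = y

def lastStep : Bool → Fin 3 → Fin 3 → Prop
  | true, x, y => y = ![1, 0, 0] x
  | false, x, y => y = ![0, 1, 1] x

def colourStep (t : ℕ) (s : Bool) (k : Fin t) : Fin 3 → Fin 3 → Prop :=
  if k.val = 0 then firstStep s else if k.val + 1 = t then lastStep s else midStep s

def slotArc (t : ℕ) (s : Bool) (p q : Fin t × Fin 3) : Prop :=
  q.1 = finSucc p.1 ∧ colourStep t s p.1 p.2 q.2

/-- `(0, 2)` is not a slot: the block at position `0` may have only two vertices. -/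
def Valid {t : ℕ} (p : Fin t × Fin 3) : Prop := p.1.val = 0 → p.2 ≠ 2

instance (s : Bool) : DecidableRel (firstStep s) := by
  cases s <;> unfold firstStep <;> infer_instance

instance (s : Bool) : DecidableRel (midStep s) := by
  cases s <;> unfold midStep <;> infer_instance

instance (s : Bool) : DecidableRel (lastStep s) := by
  cases s <;> unfold lastStep <;> infer_instance

variable {t : ℕ}

lemma colourStep_disjoint (k : Fin t) (x y : Fin 3) :
    ¬ (colourStep t true k x y ∧ colourStep t false k x y) := by
  unfold colourStep
  split_ifs <;> revert x y <;> decide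

lemma colourStep_of_val_eq_zero (s : Bool) {k : Fin t} (h0 : k.val = 0) :
    colourStep t s k = firstStep s :=
  if_pos h0

lemma colourStep_of_val_add_one_eq (s : Bool) {k : Fin t} (h0 : k.val ≠ 0) (hk : k.val + 1 = t) :
    colourStep t s k = lastStep s := by
  simp [colourStep, h0, hk]

lemma colourStep_of_ne (s : Bool) {k : Fin t} (h0 : k.val ≠ 0) (hk : k.val + 1 ≠ t) :
    colourStep t s k = midStep s := by
  simp [colourStep, h0, hk]

lemma exists_colourStep (s : Bool) (p : Fin t × Fin 3) (hp : Valid p) :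
    ∃ c, colourStep t s p.1 p.2 c := by
  unfold colourStep
  split_ifs with h0
  · exact (by decide : ∀ s x, x ≠ 2 → ∃ y, firstStep s x y) s p.2 (hp h0)
  · exact (by decide : ∀ s x, ∃ y, lastStep s x y) s p.2
  · exact (by decide : ∀ s x, ∃ y, midStep s x y) s p.2

lemma exists_colourStep_left (s : Bool) (k : Fin t) (hk : k.val + 1 ≠ t) (y : Fin 3) :
    ∃ x, Valid (k, x) ∧ colourStep t s k x y := by
  unfold colourStep
  split_ifs with h0
  · obtain ⟨x, hx, hxy⟩ := (by decide : ∀ s y, ∃ x, x ≠ 2 ∧ firstStep s x y) s y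
    exact ⟨x, fun _ => hx, hxy⟩
  · obtain ⟨x, hxy⟩ := (by decide : ∀ s y, ∃ x, midStep s x y) s y
    exact ⟨x, fun h => absurd h h0, hxy⟩

lemma valid_of_slotArc (ht : 2 ≤ t) (s : Bool) {p q : Fin t × Fin 3} (h : slotArc t s p q) :
    Valid q := by
  intro hq0
  have hval := val_finSucc p.1
  rw [← h.1, hq0] at hval
  have hlast : p.1.val + 1 = t := by split_ifs at hval; omega
  have hstep := h.2
  rw [colourStep_of_val_add_one_eq s (by omega) hlast] at hstep
  exact (by decide : ∀ s x y, lastStep s x y → y ≠ 2) s _ _ hstep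

lemma slotArc_of_midStep (s : Bool) {j : ℕ} (h0 : j ≠ 0) (hj : j + 1 < t) {x y : Fin 3}
    (hxy : midStep s x y) : slotArc t s (⟨j, by omega⟩, x) (⟨j + 1, hj⟩, y) :=
  ⟨(finSucc_mk _).symm, by
    rwa [colourStep_of_ne s (k := ⟨j, _⟩) h0 (show j + 1 ≠ t by omega)]⟩

lemma transGen_mid (s : Bool) {y z : Fin 3} (hyz : midStep s y z) (n : ℕ) (hn : n + 2 < t) :
    TransGen (slotArc t s) (⟨1, by omega⟩, y) (⟨n + 2, hn⟩, z) := by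
  induction n generalizing z with
  | zero => exact .single (slotArc_of_midStep s one_ne_zero hn hyz)
  | succ n ih =>
    obtain ⟨w, hyw, hwz⟩ := (by decide : ∀ s x z, midStep s x z →
      ∃ y, midStep s x y ∧ midStep s y z) s y z hyz
    exact (ih hyw (by omega)).tail (slotArc_of_midStep (j := n + 2) s (by omega) hn hwz)

lemma transGen_lap (ht : 3 ≤ t) (s : Bool) {k : Fin t} (hk : k.val = 0) {a y z b : Fin 3}
    (hay : firstStep s a y) (hyz : midStep s y z) (hzb : lastStep s z b) :
    TransGen (slotArc t s) (k, a) (k, b) := by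
  obtain ⟨n, rfl⟩ : ∃ n, t = n + 3 := ⟨t - 3, by omega⟩
  obtain ⟨_, hk'⟩ := k
  subst hk
  have first : slotArc (n + 3) s (⟨0, hk'⟩, a) (⟨1, by omega⟩, y) :=
    ⟨(finSucc_mk (by omega)).symm, by rwa [colourStep_of_val_eq_zero s rfl]⟩
  have last : slotArc (n + 3) s (⟨n + 2, by omega⟩, z) (⟨0, hk'⟩, b) :=
    ⟨Fin.ext (by simp [val_finSucc]), by rwa [colourStep_of_val_add_one_eq s (by simp) rfl]⟩
  exact (TransGen.head first (transGen_mid s hyz n (by omega))).tail last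

lemma transGen_of_val_eq_zero (ht : 3 ≤ t) (s : Bool) {k : Fin t} (hk : k.val = 0) {a b : Fin 3}
    (ha : a ≠ 2) (hb : b ≠ 2) : TransGen (slotArc t s) (k, a) (k, b) := by
  have lap : ∀ a b : Fin 3, a ≠ 2 → b ≠ 2 → a ≠ b →
      TransGen (slotArc t s) (k, a) (k, b) := by
    intro a b ha hb hab
    obtain ⟨y, z, hay, hyz, hzb⟩ :=
      (by decide : ∀ s (a b : Fin 3), a ≠ 2 → b ≠ 2 → a ≠ b →
        ∃ y z, firstStep s a y ∧ midStep s y z ∧ lastStep s z b) s a b ha hb hab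
    exact transGen_lap ht s hk hay hyz hzb
  by_cases hab : a = b
  · subst hab
    obtain ⟨c, hc, hac⟩ : ∃ c : Fin 3, c ≠ 2 ∧ a ≠ c := by revert a; decide
    exact (lap a c ha hc hac).trans (lap c a hc ha hac.symm)
  · exact lap a b ha hb hab

lemma exists_slotArc (ht : 2 ≤ t) (s : Bool) (p : Fin t × Fin 3) (hp : Valid p) :
    ∃ q, Valid q ∧ slotArc t s p q ∧ q.1 = finSucc p.1 := by
  obtain ⟨c, hc⟩ := exists_colourStep s p hp
  exact ⟨(finSucc p.1, c), valid_of_slotArc ht s ⟨rfl, hc⟩, ⟨rfl, hc⟩, rfl⟩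

lemma exists_slotArc_left (s : Bool) (q : Fin t × Fin 3) (hq0 : q.1.val ≠ 0) :
    ∃ p, Valid p ∧ slotArc t s p q ∧ q.1 = finSucc p.1 := by
  have hlt := q.1.isLt
  have hk : q.1.val - 1 < t := by omega
  obtain ⟨x, hx, hxy⟩ := exists_colourStep_left s ⟨q.1.val - 1, hk⟩
    (show q.1.val - 1 + 1 ≠ t by omega) q.2
  have hsucc : q.1 = finSucc ⟨q.1.val - 1, hk⟩ := by
    ext
    rw [val_finSucc]
    split_ifs <;> simp only at * <;> omega
  exact ⟨_, hx, ⟨hsucc, hxy⟩, hsucc⟩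

lemma transGen_slotArc_of_valid (ht : 3 ≤ t) (s : Bool) {p q : Fin t × Fin 3} (hp : Valid p)
    (hq : Valid q) : TransGen (slotArc t s) p q := by
  obtain ⟨⟨i, a⟩, ha, hi0, hpa⟩ :=
    exists_reflTransGen_to_fst_eq_zero (exists_slotArc (by omega) s) p hp
  obtain ⟨⟨j, b⟩, hb, hj0, hbq⟩ :=
    exists_reflTransGen_from_fst_eq_zero (fun q _ hq0 => exists_slotArc_left s q hq0) q hq
  obtain rfl : i = j := Fin.ext (hi0.trans hj0.symm)
  have hub := transGen_of_val_eq_zero ht s hi0 (ha hi0) (hb hj0)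
  exact (TransGen.trans_right hpa hub).trans_left hbq

end Slot

section BlowUp

open Slot

variable {t : ℕ} {Vt : Fin t → Type*} [∀ i, Fintype (Vt i)]

def lastClass (k : Fin t) : ℕ := if k.val = 0 then 1 else 2

noncomputable def slotOf (E : Equiv.Perm (Fin t)) (x : Σ i, Vt i) : Fin t × Fin 3 :=
  (E.symm x.1, ⟨min (Fintype.equivFin (Vt x.1) x.2) (lastClass (E.symm x.1)),
    by unfold lastClass; split_ifs <;> omega⟩)

lemma valid_slotOf (E : Equiv.Perm (Fin t)) (x : Σ i, Vt i) : Valid (slotOf E x) := by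
  intro h0 h2
  have hle : (slotOf E x).2.val ≤ lastClass (slotOf E x).1 := min_le_right _ _
  rw [h2, lastClass, if_pos h0] at hle
  exact absurd hle (by decide)

lemma exists_slotOf_eq (E : Equiv.Perm (Fin t))
    (hcap : ∀ k, lastClass k < Fintype.card (Vt (E k))) (p : Fin t × Fin 3) (hp : Valid p) :
    ∃ x : Σ i, Vt i, slotOf E x = p := by
  obtain ⟨k, c⟩ := p
  have hc : c.val ≤ lastClass k := by
    unfold lastClass; split_ifs with h0
    · exact (by decide : ∀ c : Fin 3, c ≠ 2 → c.val ≤ 1) c (hp h0)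
    · omega
  refine ⟨⟨E k, (Fintype.equivFin _).symm ⟨c.val, (hc.trans_lt (hcap k))⟩⟩, ?_⟩
  simp [slotOf, hc]

lemma isStrong_slotArc_onFun (ht : 3 ≤ t) (E : Equiv.Perm (Fin t))
    (hcap : ∀ k, lastClass k < Fintype.card (Vt (E k))) (s : Bool) :
    IsStrong (slotArc t s on slotOf (Vt := Vt) E) :=
  isStrong_onFun (fun _ w huw => exists_slotOf_eq E hcap w (valid_of_slotArc (by omega) s huw))
    (fun x y => transGen_slotArc_of_valid ht s (valid_slotOf E x) (valid_slotOf E y))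

lemma compArc_of_slotArc {T : Fin t → Fin t → Prop} (H : ∀ i, Vt i → Vt i → Prop)
    {E : Equiv.Perm (Fin t)} (hE : ∀ j, T (E j) (E (finSucc j))) {s : Bool} {x y : Σ i, Vt i}
    (h : (slotArc t s on slotOf E) x y) : CompArc T H x y := by
  left
  have := hE (E.symm x.1)
  rwa [← show (E.symm y.1) = finSucc (E.symm x.1) from h.1, E.apply_symm_apply,
    E.apply_symm_apply] at this

end BlowUp

theorem stmt_3 {t : ℕ} (ht : 3 ≤ t) {Vt : Fin t → Type*}
    [∀ i, Fintype (Vt i)]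
    (T : Fin t → Fin t → Prop) (hTham : HasHamCycle T)
    (H : ∀ i, Vt i → Vt i → Prop)
    (hcard1 : 2 ≤ Fintype.card (Vt ⟨0, by omega⟩))
    (hcard : ∀ i : Fin t, i ≠ ⟨0, by omega⟩ → 3 ≤ Fintype.card (Vt i)) :
    GoodDecomp (CompArc T H) := by
  obtain ⟨E, hE0, hE⟩ := hTham.exists_perm_apply_eq ⟨0, by omega⟩ ⟨0, by omega⟩
  have hcap : ∀ k, lastClass k < Fintype.card (Vt (E k)) := by
    intro k
    by_cases hk : k.val = 0
    · rw [show k = ⟨0, by omega⟩ from Fin.ext hk, hE0]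
      unfold lastClass
      rw [if_pos rfl]
      omega
    · have hne : E k ≠ ⟨0, by omega⟩ := fun h => hk (by
        simpa using congrArg Fin.val (E.injective (h.trans hE0.symm)))
      have := hcard (E k) hne
      simp only [lastClass, if_neg hk]
      omega
  exact ⟨Slot.slotArc t true on slotOf E, Slot.slotArc t false on slotOf E,
    fun _ _ => compArc_of_slotArc H hE, fun _ _ => compArc_of_slotArc H hE,
    fun _ _ h => Slot.colourStep_disjoint _ _ _ ⟨h.1.2, h.2.2⟩,
    isStrong_slotArc_onFun ht E hcap true, isStrong_slotArc_onFun ht E hcap false⟩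
end

section
/- The digraph Q = C3[K2bar, K2bar, K3bar], the composition of the directed 3-cycle with two arcless digraphs on 2 vertices and one arcless digraph on 3 vertices, does not have a pair of arc-disjoint strong spanning subdigraphs. -/
/-!
Each part of a good decomposition `D₁, D₂` of `Q` needs an out-arc and an in-arc at every
vertex, so a vertex with only two out-neighbours (in-neighbours) in `Q` sends (receives) exactly
one arc of each part. Hence every `c` in the third block has a single `D₁`-in-neighbour `b(c)`,
and the walk `c → a → b'` in `D₁` ends at the same `b'` as the corresponding walk in `D₂`.
Strongness of `D₁` needs vertices `c` with `(b(c), b') = (B₀, B₁)` and `(B₁, B₀)`, strongness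
of `D₂` ones with `(B₁, B₁)` and `(B₀, B₀)`: four vertices in a block of size three.
-/

open Relation

theorem Relation.ReflTransGen.exists_exit {V : Type*} {r : V → V → Prop} {S : Set V} {x y : V}
    (h : ReflTransGen r x y) (hx : x ∈ S) (hy : y ∉ S) : ∃ u v, u ∈ S ∧ v ∉ S ∧ r u v := by
  induction h with
  | refl => exact absurd hx hy
  | @tail v w _ hvw ih =>
    by_cases hv : v ∈ S
    · exact ⟨v, w, hv, hy, hvw⟩
    · exact ih hv

section GoodPair

variable {V : Type*} {A D₁ D₂ : V → V → Prop}

theorem IsStrong.exists_out [Nontrivial V] (h : IsStrong A) (x : V) : ∃ y, A x y := by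
  obtain ⟨y, hy⟩ := exists_ne x
  rcases (h x y).cases_head with rfl | ⟨z, hz, _⟩
  · exact absurd rfl hy
  · exact ⟨z, hz⟩

theorem IsStrong.swap (h : IsStrong A) : IsStrong (Function.swap A) :=
  fun x y => reflTransGen_swap.mpr (h y x)

structure IsGoodPair (A D₁ D₂ : V → V → Prop) : Prop where
  le₁ : ∀ x y, D₁ x y → A x y
  le₂ : ∀ x y, D₂ x y → A x y
  disjoint : ∀ x y, ¬ (D₁ x y ∧ D₂ x y)
  strong₁ : IsStrong D₁
  strong₂ : IsStrong D₂

theorem GoodDecomp.exists_isGoodPair (h : GoodDecomp A) : ∃ D₁ D₂, IsGoodPair A D₁ D₂ :=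
  let ⟨D₁, D₂, h₁, h₂, hd, hs₁, hs₂⟩ := h
  ⟨D₁, D₂, ⟨h₁, h₂, hd, hs₁, hs₂⟩⟩

namespace IsGoodPair

theorem symm (P : IsGoodPair A D₁ D₂) : IsGoodPair A D₂ D₁ :=
  ⟨P.le₂, P.le₁, fun x y h => P.disjoint x y h.symm, P.strong₂, P.strong₁⟩

theorem swap (P : IsGoodPair A D₁ D₂) :
    IsGoodPair (Function.swap A) (Function.swap D₁) (Function.swap D₂) :=
  ⟨fun x y => P.le₁ y x, fun x y => P.le₂ y x, fun x y => P.disjoint y x,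
    P.strong₁.swap, P.strong₂.swap⟩

theorem out_of_out {x u v : V} (P : IsGoodPair A D₁ D₂) [Nontrivial V]
    (hx : ∀ y, A x y → y = u ∨ y = v) (hu : D₂ x u) : D₁ x v := by
  obtain ⟨y, hy⟩ := P.strong₁.exists_out x
  rcases hx y (P.le₁ x y hy) with rfl | rfl
  · exact absurd ⟨hy, hu⟩ (P.disjoint x y)
  · exact hy

theorem eq_of_out {x u v y y' : V} (P : IsGoodPair A D₁ D₂) [Nontrivial V]
    (hx : ∀ y, A x y → y = u ∨ y = v) (hy : D₁ x y) (hy' : D₁ x y') : y = y' := by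
  obtain ⟨z, hz⟩ := P.strong₂.exists_out x
  have hyz : y ≠ z := by rintro rfl; exact P.disjoint x y ⟨hy, hz⟩
  have hy'z : y' ≠ z := by rintro rfl; exact P.disjoint x y' ⟨hy', hz⟩
  rcases hx y (P.le₁ x y hy) with rfl | rfl <;> rcases hx y' (P.le₁ x y' hy') with rfl | rfl <;>
    rcases hx z (P.le₂ x z hz) with rfl | rfl <;> tauto

theorem eq_of_in {x u v y y' : V} (P : IsGoodPair A D₁ D₂) [Nontrivial V]
    (hx : ∀ y, A y x → y = u ∨ y = v) (hy : D₁ y x) (hy' : D₁ y' x) : y = y' :=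
  P.swap.eq_of_out hx hy hy'

end IsGoodPair

end GoodPair

abbrev Av (i : Fin 2) : Fin 2 ⊕ Fin 2 ⊕ Fin 3 := .inl i
abbrev Bv (k : Fin 2) : Fin 2 ⊕ Fin 2 ⊕ Fin 3 := .inr (.inl k)
abbrev Cv (j : Fin 3) : Fin 2 ⊕ Fin 2 ⊕ Fin 3 := .inr (.inr j)

instance : Nontrivial (Fin 2 ⊕ Fin 2 ⊕ Fin 3) := ⟨⟨Av 0, Bv 0, Sum.inl_ne_inr⟩⟩

instance : DecidableRel Exc3 := fun _ _ => inferInstanceAs (Decidable (_ = _))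

namespace Exc3

theorem out_Av {i k k' : Fin 2} (hk : k ≠ k') : ∀ y, Exc3 (Av i) y → y = Bv k ∨ y = Bv k' := by
  revert i k k'; decide

theorem in_Bv {k i i' : Fin 2} (hi : i ≠ i') : ∀ x, Exc3 x (Bv k) → x = Av i ∨ x = Av i' := by
  revert k i i'; decide

theorem in_Cv {j : Fin 3} : ∀ x, Exc3 x (Cv j) → x = Bv 0 ∨ x = Bv 1 := by
  revert j; decide

theorem out_Bv {k : Fin 2} : ∀ y, Exc3 (Bv k) y → ∃ j, y = Cv j := by
  revert k; decide

theorem out_Cv {j : Fin 3} : ∀ y, Exc3 (Cv j) y → ∃ i, y = Av i := by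
  revert j; decide

theorem exists_route {D : Fin 2 ⊕ Fin 2 ⊕ Fin 3 → Fin 2 ⊕ Fin 2 ⊕ Fin 3 → Prop}
    (hD : ∀ x y, D x y → Exc3 x y) (hs : IsStrong D)
    {k k' : Fin 2} (hk : k ≠ k') :
    ∃ j i, D (Bv k) (Cv j) ∧ D (Cv j) (Av i) ∧ D (Av i) (Bv k') := by
  -- A walk from `Bv k` to `Bv k'` leaves the set of vertices within two arcs of `Bv k`.
  let S := {v | v = Bv k ∨ D (Bv k) v ∨ ∃ c, D (Bv k) c ∧ D c v}
  have hk' : Bv k' ∉ S := by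
    rintro (h | h | ⟨c, hc, h⟩)
    · exact hk (Sum.inr.inj h |> Sum.inl.inj).symm
    · obtain ⟨j, h⟩ := out_Bv _ (hD _ _ h)
      cases h
    · obtain ⟨j, rfl⟩ := out_Bv _ (hD _ _ hc)
      obtain ⟨i, h⟩ := out_Cv _ (hD _ _ h)
      cases h
  obtain ⟨u, w, hu, hw, huw⟩ := (hs (Bv k) (Bv k')).exists_exit (Or.inl rfl) hk'
  rcases hu with rfl | hu | ⟨c, hc, hu⟩
  · exact absurd (Or.inr (Or.inl huw)) hw
  · exact absurd (Or.inr (Or.inr ⟨u, hu, huw⟩)) hw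
  obtain ⟨j, rfl⟩ := out_Bv _ (hD _ _ hc)
  obtain ⟨i, rfl⟩ := out_Cv _ (hD _ _ hu)
  rcases out_Av hk _ (hD _ _ huw) with rfl | rfl
  · exact absurd (Or.inl rfl) hw
  · exact ⟨j, i, hc, hu, huw⟩

variable {D₁ D₂ : Fin 2 ⊕ Fin 2 ⊕ Fin 3 → Fin 2 ⊕ Fin 2 ⊕ Fin 3 → Prop}

theorem eq_of_in_Cv (P : IsGoodPair Exc3 D₁ D₂) {j : Fin 3} {k k' : Fin 2}
    (h : D₁ (Bv k) (Cv j)) (h' : D₁ (Bv k') (Cv j)) : k = k' :=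
  Sum.inl.inj (Sum.inr.inj (P.eq_of_in in_Cv h h'))

theorem route_target_eq (P : IsGoodPair Exc3 D₁ D₂) {j : Fin 3} {i i' k k' : Fin 2}
    (hci : D₁ (Cv j) (Av i)) (hik : D₁ (Av i) (Bv k))
    (hci' : D₂ (Cv j) (Av i')) (hik' : D₂ (Av i') (Bv k')) : k = k' := by
  by_contra hk
  have hi : i ≠ i' := by rintro rfl; exact P.disjoint _ _ ⟨hci, hci'⟩
  have hi'k : D₁ (Av i') (Bv k) := P.out_of_out (out_Av (Ne.symm hk)) hik'
  exact hi (Sum.inl.inj (P.eq_of_in (in_Bv hi) hik hi'k))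

end Exc3

theorem fin_three_pigeonhole (a b c d : Fin 3) :
    a = b ∨ a = c ∨ a = d ∨ b = c ∨ b = d ∨ c = d := by
  omega

theorem stmt_6 : ¬ GoodDecomp Exc3 := by
  intro h
  obtain ⟨D₁, D₂, P⟩ := h.exists_isGoodPair
  have h01 : (0 : Fin 2) ≠ 1 := by decide
  obtain ⟨j₁, i₁, b₁, c₁, a₁⟩ := Exc3.exists_route P.le₁ P.strong₁ h01
  obtain ⟨j₂, i₂, b₂, c₂, a₂⟩ := Exc3.exists_route P.le₁ P.strong₁ h01.symm
  obtain ⟨j₃, i₃, b₃, c₃, a₃⟩ := Exc3.exists_route P.le₂ P.strong₂ h01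
  obtain ⟨j₄, i₄, b₄, c₄, a₄⟩ := Exc3.exists_route P.le₂ P.strong₂ h01.symm
  rcases fin_three_pigeonhole j₁ j₂ j₃ j₄ with rfl | rfl | rfl | rfl | rfl | rfl
  · exact h01 (Exc3.eq_of_in_Cv P b₁ b₂)
  · exact P.disjoint _ _ ⟨b₁, b₃⟩
  · exact h01.symm (Exc3.route_target_eq P c₁ a₁ c₄ a₄)
  · exact h01 (Exc3.route_target_eq P c₂ a₂ c₃ a₃)
  · exact P.disjoint _ _ ⟨b₂, b₄⟩
  · exact h01 (Exc3.eq_of_in_Cv P.symm b₃ b₄)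
end

section
/- The digraph C3[K2bar, K2bar, K2bar] (equivalently, the complete bipartite-like directed blow-up of the 3-cycle by independent sets of size 2) does not have a pair of arc-disjoint strong spanning subdigraphs. -/
/-!
Every vertex of `C3[K2bar, K2bar, K2bar]` has out-degree two, and each of two arc-disjoint strong
spanning subdigraphs needs an out-arc at every vertex. So the two parts are functional digraphs
`(i, a) ↦ (i + 1, f (i, a))` and `(i, a) ↦ (i + 1, f (i, a) + 1)`. Going once around the blocks,
one of the two returns some vertex to itself after three steps, and a functional digraph in which
a vertex has period three cannot be strong on six vertices.
-/

theorem IsStrong.exists_arc {V : Type*} {A : V → V → Prop} (hA : IsStrong A) {x y : V}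
    (hxy : x ≠ y) : ∃ z, A x z := by
  rcases (hA x y).cases_head with h | ⟨z, hz, -⟩
  · exact absurd h hxy
  · exact ⟨z, hz⟩

theorem IsStrong.mono {V : Type*} {A B : V → V → Prop} (hA : IsStrong A)
    (hAB : ∀ x y, A x y → B x y) : IsStrong B :=
  fun x y => Relation.ReflTransGen.mono hAB x y (hA x y)

theorem Relation.ReflTransGen.exists_iterate_eq {V : Type*} {g : V → V} {x y : V}
    (hxy : Relation.ReflTransGen (fun p q => q = g p) x y) : ∃ n, g^[n] x = y := by
  induction hxy with
  | refl => exact ⟨0, rfl⟩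
  | tail _ hyz ih =>
    obtain ⟨n, rfl⟩ := ih
    exact ⟨n + 1, by rw [Function.iterate_succ_apply', hyz]⟩

theorem Function.IsPeriodicPt.not_isStrong {V : Type*} [Fintype V] {g : V → V} {k : ℕ} {x : V}
    (hx : Function.IsPeriodicPt g k x) (hk : 0 < k) (hcard : k < Fintype.card V) :
    ¬ IsStrong fun p q => q = g p := by
  intro hS
  have hsurj : Function.Surjective fun i : Fin k => g^[i] x := fun y => by
    obtain ⟨n, rfl⟩ := (hS x y).exists_iterate_eq
    exact ⟨⟨n % k, Nat.mod_lt n hk⟩, hx.iterate_mod_apply n⟩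
  have := Fintype.card_le_of_surjective _ hsurj
  rw [Fintype.card_fin] at this
  omega

def cycleStep (f : Fin 3 × Fin 2 → Fin 2) (p : Fin 3 × Fin 2) : Fin 3 × Fin 2 :=
  (finSucc p.1, f p)

theorem isPeriodicPt_cycleStep_three {f : Fin 3 × Fin 2 → Fin 2} {a : Fin 2}
    (ha : f (2, f (1, f (0, a))) = a) : Function.IsPeriodicPt (cycleStep f) 3 (0, a) := by
  simp only [Function.IsPeriodicPt, Function.IsFixedPt, Function.iterate_succ_apply',
    Function.iterate_zero_apply, cycleStep]
  exact Prod.ext rfl ha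

theorem Fin.two_eq_of_ne_of_ne {a b c : Fin 2} (ha : a ≠ c) (hb : b ≠ c) : a = b := by
  omega

theorem Fin.two_add_one_ne (a : Fin 2) : a + 1 ≠ a := by
  omega

theorem GoodDecomp.exists_isStrong_cycleStep (h : GoodDecomp Exc1) :
    ∃ f : Fin 3 × Fin 2 → Fin 2, IsStrong (fun p q => q = cycleStep f p) ∧
      IsStrong (fun p q => q = cycleStep (fun p => f p + 1) p) := by
  obtain ⟨A₁, A₂, hA₁, hA₂, hdisj, hS₁, hS₂⟩ := h
  have harc : ∀ {B : Fin 3 × Fin 2 → Fin 3 × Fin 2 → Prop}, (∀ x y, B x y → Exc1 x y) →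
      ∀ {p q}, B p q → q = (finSucc p.1, q.2) :=
    fun hB _ _ hpq => Prod.ext (hB _ _ hpq) rfl
  have hout : ∀ {B : Fin 3 × Fin 2 → Fin 3 × Fin 2 → Prop}, IsStrong B →
      (∀ x y, B x y → Exc1 x y) → ∀ p, ∃ b, B p (finSucc p.1, b) := by
    intro B hS hB p
    obtain ⟨q, hq⟩ := hS.exists_arc (x := p) (y := (p.1, p.2 + 1)) (by simp [Prod.ext_iff])
    exact ⟨q.2, harc hB hq ▸ hq⟩
  choose f₁ hf₁ using hout hS₁ hA₁
  choose f₂ hf₂ using hout hS₂ hA₂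
  have hne : ∀ p, f₂ p ≠ f₁ p := fun p he => hdisj p _ ⟨hf₁ p, he ▸ hf₂ p⟩
  refine ⟨f₁, hS₁.mono fun p q hpq => ?_, hS₂.mono fun p q hpq => ?_⟩
  · have hq₂ : q.2 ≠ f₂ p := fun he => hdisj p q ⟨hpq, harc hA₁ hpq ▸ he ▸ hf₂ p⟩
    rw [harc hA₁ hpq, Fin.two_eq_of_ne_of_ne hq₂ (hne p).symm]
    rfl
  · have hq₂ : q.2 ≠ f₁ p := fun he => hdisj p q ⟨harc hA₂ hpq ▸ he ▸ hf₁ p, hpq⟩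
    rw [harc hA₂ hpq, Fin.two_eq_of_ne_of_ne hq₂ (Fin.two_add_one_ne (f₁ p))]
    rfl

/- If `g₂ ∘ g₁ ∘ g₀` has no fixed point it is the swap, so each `gᵢ` is `a ↦ a + cᵢ` with
`c₀ + c₁ + c₂ = 1`; the flipped composite is then `a ↦ a + c₀ + c₁ + c₂ + 3 = a`. -/
theorem Fin.two_exists_fixed_comp_or_flip_comp (g₀ g₁ g₂ : Fin 2 → Fin 2) :
    (∃ a, g₂ (g₁ (g₀ a)) = a) ∨ ∃ a, g₂ (g₁ (g₀ a + 1) + 1) + 1 = a := by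
  revert g₀ g₁ g₂; decide

theorem stmt_7 : ¬ GoodDecomp Exc1 := by
  intro h
  obtain ⟨f, hS₁, hS₂⟩ := h.exists_isStrong_cycleStep
  rcases Fin.two_exists_fixed_comp_or_flip_comp (f ⟨0, ·⟩) (f ⟨1, ·⟩) (f ⟨2, ·⟩) with
    ⟨a, ha⟩ | ⟨a, ha⟩
  · exact (isPeriodicPt_cycleStep_three ha).not_isStrong three_pos (by simp) hS₁
  · exact (isPeriodicPt_cycleStep_three (f := fun p => f p + 1) ha).not_isStrong three_pos
      (by simp) hS₂
end
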